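/- arXiv:1607.08858 — 2 statements merged into one kernel-verified Lean document; each statement's English description precedes it below -/
import Mathlib

section
/- The zero-divisors cup-length of the n-sphere is 1 if n is odd and 2 if n is even, with rational coefficients. That is, the maximal number of elements of ker(∪ : H^*(S^n; Q) ⊗ H^*(S^n; Q) → H^*(S^n; Q)) with nonzero product is 1 for n odd and 2 for n even. -/
/-!
The zero-divisors are spanned by `p = a - b` and `q = a * b`.
Since `a² = b² = 0`, the products `pq`, `qp`, `q²` vanish, hence any product of two
zero-divisors is a multiple of `p² = -(ab + ba)`, and any product of three vanishes.
For odd `n` the classes `a`, `b` anticommute and `p² = 0`; for even `n` they commute and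
`p² = -2ab ≠ 0`.
-/

section SquareZeroPair

variable {R T : Type*} [CommRing R] [Ring T] [Algebra R T] {a b : T}

theorem mul_eq_zero_of_mem_span_pair {x y z w : T} (hy : x * y = 0) (hz : x * z = 0)
    (hw : w ∈ Submodule.span R {y, z}) : x * w = 0 := by
  obtain ⟨c, d, rfl⟩ := Submodule.mem_span_pair.mp hw
  rw [mul_add, mul_smul_comm, mul_smul_comm, hy, hz, smul_zero, smul_zero, add_zero]

theorem sub_mul_self_eq_neg_add_of_mul_self_eq_zero (ha : a * a = 0) (hb : b * b = 0) :
    (a - b) * (a - b) = -(a * b + b * a) := by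
  rw [sub_mul, mul_sub, mul_sub, ha, hb]
  abel

theorem mul_mul_left_eq_zero_of_eq_zsmul (hb : b * b = 0) {s : ℤ}
    (hcomm : a * b = s • (b * a)) : b * (a * b) = 0 := by
  rw [hcomm, mul_smul_comm, ← mul_assoc, hb, zero_mul, smul_zero]

theorem mul_mul_right_eq_zero_of_eq_zsmul (ha : a * a = 0) {s : ℤ}
    (hcomm : a * b = s • (b * a)) : a * (b * a) = 0 := by
  rw [← mul_assoc, hcomm, smul_mul_assoc, mul_assoc, ha, mul_zero, smul_zero]

theorem mul_mul_eq_zero_of_mem_span_sub_mul (hb : b * b = 0) (haba : a * (b * a) = 0)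
    (hbab : b * (a * b) = 0) {w : T} (hw : w ∈ Submodule.span R {a - b, a * b}) :
    a * b * w = 0 :=
  mul_eq_zero_of_mem_span_pair (by rw [mul_sub, mul_assoc, mul_assoc, haba, hb, mul_zero,
    sub_zero]) (by rw [mul_assoc, hbab, mul_zero]) hw

theorem mul_mul_swap_eq_zero_of_mem_span_sub_mul (ha : a * a = 0) (hbab : b * (a * b) = 0) {w : T}
    (hw : w ∈ Submodule.span R {a - b, a * b}) :
    b * a * w = 0 :=
  mul_eq_zero_of_mem_span_pair (by rw [mul_sub, mul_assoc, mul_assoc, ha, hbab, mul_zero,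
    sub_zero]) (by rw [mul_assoc, ← mul_assoc a, ha, zero_mul, mul_zero]) hw

theorem sub_mul_self_mul_eq_zero_of_mem_span_sub_mul (ha : a * a = 0) (hb : b * b = 0)
    (haba : a * (b * a) = 0) (hbab : b * (a * b) = 0) {w : T}
    (hw : w ∈ Submodule.span R {a - b, a * b}) :
    (a - b) * (a - b) * w = 0 := by
  rw [sub_mul_self_eq_neg_add_of_mul_self_eq_zero ha hb, neg_mul, add_mul,
    mul_mul_eq_zero_of_mem_span_sub_mul hb haba hbab hw,
    mul_mul_swap_eq_zero_of_mem_span_sub_mul ha hbab hw, add_zero, neg_zero]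

theorem mul_mem_span_sub_mul_eq_smul (ha : a * a = 0) (hb : b * b = 0) (haba : a * (b * a) = 0)
    (hbab : b * (a * b) = 0) {u v : T} (hu : u ∈ Submodule.span R {a - b, a * b})
    (hv : v ∈ Submodule.span R {a - b, a * b}) :
    ∃ c : R, u * v = c • ((a - b) * (a - b)) := by
  obtain ⟨c, d, rfl⟩ := Submodule.mem_span_pair.mp hu
  obtain ⟨e, f, rfl⟩ := Submodule.mem_span_pair.mp hv
  have hpq : (a - b) * (a * b) = 0 := by rw [sub_mul, ← mul_assoc, ha, zero_mul, hbab, sub_zero]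
  refine ⟨c * e, ?_⟩
  rw [add_mul, smul_mul_assoc, smul_mul_assoc,
    mul_mul_eq_zero_of_mem_span_sub_mul hb haba hbab hv, smul_zero, add_zero, mul_add,
    mul_smul_comm, mul_smul_comm, hpq, smul_zero, add_zero, smul_smul]

theorem mul_mul_eq_zero_of_three_mem_span_sub_mul (ha : a * a = 0) (hb : b * b = 0)
    (haba : a * (b * a) = 0) (hbab : b * (a * b) = 0) {u v w : T}
    (hu : u ∈ Submodule.span R {a - b, a * b}) (hv : v ∈ Submodule.span R {a - b, a * b})
    (hw : w ∈ Submodule.span R {a - b, a * b}) :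
    u * v * w = 0 := by
  obtain ⟨c, hc⟩ := mul_mem_span_sub_mul_eq_smul ha hb haba hbab hu hv
  rw [hc, smul_mul_assoc, sub_mul_self_mul_eq_zero_of_mem_span_sub_mul ha hb haba hbab hw,
    smul_zero]

end SquareZeroPair

theorem zcl_sphere_general
    (n : ℕ)
    (T S : Type) [Ring T] [Ring S] [Algebra ℚ T] [Algebra ℚ S]
    (a b : T)                                        -- `x⊗1`, `1⊗x`
    (ha : a * a = 0) (hb : b * b = 0)
    (hcomm : a * b = ((-1 : ℤ) ^ (n * n)) • (b * a)) -- graded commutativity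
    (hind : LinearIndependent ℚ ![1, a, b, a * b])
    (μ : T →ₐ[ℚ] S)                                  -- the cup-product map `Δ^*`
    (hker : ∀ u : T, μ u = 0 ↔ u ∈ Submodule.span ℚ ({a - b, a * b} : Set T)) :
    (Odd n → (∃ u : T, μ u = 0 ∧ u ≠ 0) ∧
      (∀ u v : T, μ u = 0 → μ v = 0 → u * v = 0)) ∧
    (Even n → (∃ u v : T, μ u = 0 ∧ μ v = 0 ∧ u * v ≠ 0) ∧
      (∀ u v w : T, μ u = 0 → μ v = 0 → μ w = 0 → u * v * w = 0)) := by
  have hbab := mul_mul_left_eq_zero_of_eq_zsmul hb hcomm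
  have haba := mul_mul_right_eq_zero_of_eq_zsmul ha hcomm
  have hp : μ (a - b) = 0 := (hker _).mpr (Submodule.subset_span (Set.mem_insert _ _))
  have hpp := sub_mul_self_eq_neg_add_of_mul_self_eq_zero ha hb
  refine ⟨fun hodd => ⟨⟨a - b, hp, ?_⟩, fun u v hu hv => ?_⟩,
    fun heven => ⟨⟨a - b, a - b, hp, hp, ?_⟩, fun u v w hu hv hw => ?_⟩⟩
  · simpa [sub_eq_zero] using hind.injective.ne (show (1 : Fin 4) ≠ 2 by decide)
  · have hanti : a * b + b * a = 0 := by
      rw [hcomm, (hodd.mul hodd).neg_one_pow, neg_one_zsmul, neg_add_cancel]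
    obtain ⟨c, hc⟩ := mul_mem_span_sub_mul_eq_smul ha hb haba hbab ((hker u).mp hu)
      ((hker v).mp hv)
    rw [hc, hpp, hanti, neg_zero, smul_zero]
  · have hab : a * b ≠ 0 := by simpa using hind.ne_zero 3
    have hsym : a * b = b * a := by
      rw [hcomm, (heven.mul_right n).neg_one_pow, one_zsmul]
    rw [hpp, ← hsym, neg_ne_zero, ← two_smul ℚ]
    exact smul_ne_zero two_ne_zero hab
  · exact mul_mul_eq_zero_of_three_mem_span_sub_mul ha hb haba hbab ((hker u).mp hu)
      ((hker v).mp hv) ((hker w).mp hw)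

/-- The rational zero-divisors cup-length of `S^n` is `1` if `n` is odd and `2` if `n`
is even. Here `T = H^*(S^n × S^n; ℚ)` with basis `1, a, b, a*b` where `a = x⊗1`,
`b = 1⊗x` satisfy `a² = b² = 0` and graded commutativity `ab = (−1)^{n²} ba`;
`μ : T → S = H^*(S^n; ℚ)` is the cup-product map (pullback along the diagonal), whose
kernel (the ideal of zero-divisors) is spanned by `a − b` and `a*b`. -/
theorem zcl_sphere
    (n : ℕ) (hn : 1 ≤ n)
    (T S : Type) [Ring T] [Ring S] [Algebra ℚ T] [Algebra ℚ S]
    (a b : T)                                        -- `x⊗1`, `1⊗x`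
    (ha : a * a = 0) (hb : b * b = 0)
    (hcomm : a * b = ((-1 : ℤ) ^ (n * n)) • (b * a)) -- graded commutativity
    (hind : LinearIndependent ℚ ![1, a, b, a * b])
    (hspan : Submodule.span ℚ ({1, a, b, a * b} : Set T) = ⊤)
    (μ : T →ₐ[ℚ] S)                                  -- the cup-product map `Δ^*`
    (hker : ∀ u : T, μ u = 0 ↔ u ∈ Submodule.span ℚ ({a - b, a * b} : Set T)) :
    (Odd n → (∃ u : T, μ u = 0 ∧ u ≠ 0) ∧
      (∀ u v : T, μ u = 0 → μ v = 0 → u * v = 0)) ∧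
    (Even n → (∃ u v : T, μ u = 0 ∧ μ v = 0 ∧ u * v ≠ 0) ∧
      (∀ u v w : T, μ u = 0 → μ v = 0 → μ w = 0 → u * v * w = 0)) :=
  zcl_sphere_general n T S a b ha hb hcomm hind μ hker
end

section
/- Let α : S^{2p−1} → S^p (p ≥ 2 even) be a map with nonzero classical Hopf invariant H(α) = h ∈ Z, and X = S^p ∪_α e^{2p}. Let x ∈ H^p(X; Q) and y ∈ H^{2p}(X; Q) be generators with x ∪ x = h·y. Then the product of four zero-divisors x̄ = 1⊗x − x⊗1 in H^*(X × X; Q) is nonzero: x̄⁴ = 6h²·(y ⊗ y) ≠ 0. Hence the rational zero-divisors cup-length of X is at least 4. -/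
open TensorProduct

/-- Let `α : S^{2p−1} → S^p` (`p ≥ 2` even) have nonzero Hopf invariant `h`, and
`X = S^p ∪_α e^{2p}`, so `A = H^*(X; ℚ)` has generators `x` (degree `p`) and `y`
(degree `2p`) with `x² = h·y`, `y² = 0`, `xy = 0` (and `A` is commutative since `p`
is even). Then in `H^*(X × X; ℚ) ≅ A ⊗ A` the zero-divisor `x̄ = 1⊗x − x⊗1`
satisfies `x̄⁴ = 6h²·(y⊗y) ≠ 0`; hence the rational zero-divisors cup-length of `X`
is at least `4`. -/
theorem hopf_invariant_zcl_four
    (p : ℕ) (hp : 2 ≤ p) (hpe : Even p)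
    (h : ℤ) (hh : h ≠ 0)
    (A : Type) [CommRing A] [Algebra ℚ A]        -- `A = H^*(X; ℚ)`, commutative as `p` is even
    (x y : A) (hy0 : y ≠ 0)
    (hxx : x * x = h • y)                        -- Hopf invariant `h`
    (hyy : y * y = 0) (hxy : x * y = 0)
    (xbar : A ⊗[ℚ] A)
    (hxbar : xbar = (1 : A) ⊗ₜ[ℚ] x - x ⊗ₜ[ℚ] (1 : A)) :
    Algebra.TensorProduct.lmul' ℚ xbar = 0 ∧      -- `x̄` is a zero-divisor
      xbar ^ 4 = (6 * h ^ 2) • ((y : A) ⊗ₜ[ℚ] (y : A)) ∧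
      xbar ^ 4 ≠ 0 := by
  -- Step 1: the square
  have e2 : xbar ^ 2 = h • ((1:A) ⊗ₜ[ℚ] y) + h • (y ⊗ₜ[ℚ] (1:A)) - (2:ℤ) • (x ⊗ₜ[ℚ] x) := by
    rw [hxbar, pow_two]
    simp only [sub_mul, mul_sub, Algebra.TensorProduct.tmul_mul_tmul, one_mul, mul_one, hxx,
      TensorProduct.tmul_smul, ← TensorProduct.smul_tmul']
    module
  -- Step 2: the fourth power
  have e4 : xbar ^ 4 = (6 * h ^ 2) • ((y : A) ⊗ₜ[ℚ] (y : A)) := by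
    have : xbar ^ 4 = (xbar ^ 2) * (xbar ^ 2) := by ring
    rw [this, e2]
    simp only [sub_mul, mul_sub, add_mul, mul_add, smul_mul_assoc, mul_smul_comm,
      Algebra.TensorProduct.tmul_mul_tmul, one_mul, mul_one, hxx, hyy, hxy, mul_comm y x,
      TensorProduct.tmul_smul, ← TensorProduct.smul_tmul', tmul_zero, zero_tmul, smul_zero]
    module
  -- Step 3: nonvanishing of `y ⊗ y`
  have hyy0 : (y ⊗ₜ[ℚ] y : A ⊗[ℚ] A) ≠ 0 := by
    obtain ⟨f, hf⟩ : ∃ f : Module.Dual ℚ A, f y ≠ 0 := by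
      by_contra hc
      push_neg at hc
      exact hy0 ((Module.forall_dual_apply_eq_zero_iff ℚ y).mp hc)
    intro h0
    have h1 : ((TensorProduct.lid ℚ ℚ).toLinearMap ∘ₗ TensorProduct.map f f) (y ⊗ₜ[ℚ] y) = 0 := by
      rw [h0]; exact map_zero _
    simp [TensorProduct.map_tmul] at h1
    tauto
  refine ⟨?_, e4, ?_⟩
  · rw [hxbar]
    simp
  · rw [e4]
    intro h0
    have h6 : (6 * h ^ 2 : ℤ) ≠ 0 := by positivity
    exact hyy0 ((smul_eq_zero_iff_right (show ((6 * h ^ 2 : ℤ) : ℚ) ≠ 0 by exact_mod_cast h6)).mp (by rw [Int.cast_smul_eq_zsmul]; exact h0))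
end
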